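/- Let G be a trivially perfect graph with cotree T in which every 1-labeled node has at most one non-leaf child, and let 𝒞 be a well-behaved clustering of G. Let u be a node of T with clade X = L(u), and let k*_u = max_{C_j ∈ 𝒞} |X ∩ C_j|. Then the restriction 𝒞|_X = {C ∩ X : C ∈ 𝒞, C ∩ X ≠ ∅} is a clustering of the induced subgraph G[X] whose cost cost_{G[X]}(𝒞|_X) is minimum among all clusterings of G[X] whose largest part has size exactly k*_u. -/

import Mathlib

open Finset

universe u

set_option linter.unusedSectionVars false
namespace ClusterEditing




variable {V : Type u}

/-- Cost of a partition `P` of the finset `X` with respect to `G`: the number of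
edges of `G` within `X` whose endpoints lie in different parts, plus the number of
non-adjacent pairs of distinct vertices lying in the same part. -/
noncomputable def costOn [DecidableEq V] (G : SimpleGraph V) (X : Finset V) (P : Finpartition X) : ℕ :=
  {e : Sym2 V | e ∈ G.edgeSet ∧ (∀ v ∈ e, v ∈ X) ∧ ¬ ∃ C ∈ P.parts, ∀ v ∈ e, v ∈ C}.ncard +
  {e : Sym2 V | e ∈ Gᶜ.edgeSet ∧ ∃ C ∈ P.parts, ∀ v ∈ e, v ∈ C}.ncard

/-- Cost of a clustering (a partition of the whole vertex set). -/
noncomputable def cost [Fintype V] [DecidableEq V] (G : SimpleGraph V)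
    (P : Finpartition (univ : Finset V)) : ℕ :=
  costOn G univ P

/-- An optimal clustering: one of minimum cost. -/
def IsOptimal [Fintype V] [DecidableEq V] (G : SimpleGraph V)
    (P : Finpartition (univ : Finset V)) : Prop :=
  ∀ Q : Finpartition (univ : Finset V), cost G P ≤ cost G Q

/-- Number of (ordered) adjacent pairs `(u, v)` with `u ∈ S`, `v ∈ T`. -/
noncomputable def eBetween (G : SimpleGraph V) (S T : Finset V) : ℕ :=
  {p : V × V | p.1 ∈ S ∧ p.2 ∈ T ∧ G.Adj p.1 p.2}.ncard

/-- Number of non-adjacent pairs between `S` and `T`. -/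
noncomputable def nonEBetween (G : SimpleGraph V) (S T : Finset V) : ℕ :=
  S.card * T.card - eBetween G S T





variable {V : Type u}

/-- A cotree: leaves are vertices; internal nodes carry a label (`true` = 1-node,
`false` = 0-node) and a list of children. -/
inductive Cotree (V : Type u) : Type u
  | leaf : V → Cotree V
  | node : Bool → List (Cotree V) → Cotree V

namespace Cotree

mutual
  /-- The list of leaves of a cotree. -/
  def leaves : Cotree V → List V
    | .leaf v => [v]
    | .node _ ts => leavesAux ts
  def leavesAux : List (Cotree V) → List V
    | [] => []
    | t :: ts => leaves t ++ leavesAux ts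
end

mutual
  /-- The list of all subtrees (nodes) of a cotree, including itself. -/
  def subtrees : Cotree V → List (Cotree V)
    | .leaf v => [.leaf v]
    | .node b ts => .node b ts :: subtreesAux ts
  def subtreesAux : List (Cotree V) → List (Cotree V)
    | [] => []
    | t :: ts => subtrees t ++ subtreesAux ts
end

/-- The clade (set of leaves) of a cotree node. -/
def leafSet [DecidableEq V] (t : Cotree V) : Finset V := t.leaves.toFinset

def isLeaf : Cotree V → Bool
  | .leaf _ => true
  | .node _ _ => false

/-- `v` is a leaf child of the 1-labeled node `s`. -/
def oneLeafChild : Cotree V → V → Prop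
  | .node true ts, v => Cotree.leaf v ∈ ts
  | _, _ => False

/-- The adjacency relation defined by a cotree: `u` and `v` are adjacent iff their
lowest common ancestor is a 1-node, i.e. some 1-node has `u`, `v` in two
distinct children. -/
def cAdj (T : Cotree V) (u v : V) : Prop :=
  ∃ ts : List (Cotree V), Cotree.node true ts ∈ T.subtrees ∧
    ∃ t₁ ∈ ts, ∃ t₂ ∈ ts, t₁ ≠ t₂ ∧ u ∈ t₁.leaves ∧ v ∈ t₂.leaves

end Cotree

/-- `T` is a cotree for the graph `G`: its leaves are exactly the vertices of `G`
(each occurring once), every internal node has at least two children, and two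
vertices are adjacent in `G` iff their lowest common ancestor in `T` is a 1-node. -/
structure IsCotree (T : Cotree V) (G : SimpleGraph V) : Prop where
  nodup : T.leaves.Nodup
  complete : ∀ v : V, v ∈ T.leaves
  arity : ∀ (b : Bool) (ts : List (Cotree V)), Cotree.node b ts ∈ T.subtrees → 2 ≤ ts.length
  adj : ∀ u v : V, G.Adj u v ↔ T.cAdj u v

/-- Every 1-labeled node of `T` has at most one non-leaf child. -/
def TPGCotree (T : Cotree V) : Prop :=
  ∀ ts : List (Cotree V), Cotree.node true ts ∈ T.subtrees →
    (ts.filter fun t => !t.isLeaf).length ≤ 1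

/-- A graph is trivially perfect if it admits a cotree in which every 1-labeled
node has at most one non-leaf child. -/
def IsTPG (G : SimpleGraph V) : Prop :=
  ∃ T : Cotree V, IsCotree T G ∧ TPGCotree T

/-- `X` grows in the part `C`. -/
def grows [DecidableEq V] (X C : Finset V) : Prop :=
  (C ∩ X).Nonempty ∧ (C \ X).Nonempty

/-- `X` grows in at most one part of `𝒞`. -/
def SingleGrowth [Fintype V] [DecidableEq V] (𝒞 : Finpartition (univ : Finset V))
    (X : Finset V) : Prop :=
  ∀ C₁ ∈ 𝒞.parts, ∀ C₂ ∈ 𝒞.parts, grows X C₁ → grows X C₂ → C₁ = C₂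

/-- Every clade of `T` has single-growth in `𝒞`. -/
def AllSG [Fintype V] [DecidableEq V] (T : Cotree V)
    (𝒞 : Finpartition (univ : Finset V)) : Prop :=
  ∀ s ∈ T.subtrees, SingleGrowth 𝒞 s.leafSet


section TreeLemmas
namespace Cotree

theorem self_mem_subtrees : ∀ t : Cotree V, t ∈ t.subtrees
  | .leaf v => by simp [subtrees]
  | .node b ts => by simp [subtrees]

mutual
theorem sublist_of_mem_subtrees : ∀ {t s : Cotree V}, s ∈ t.subtrees → s.leaves.Sublist t.leaves
  | .leaf v, s, h => by
      simp [subtrees] at h; subst h; exact List.Sublist.refl _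
  | .node b ts, s, h => by
      rw [subtrees] at h
      rcases List.mem_cons.1 h with h | h
      · subst h; exact List.Sublist.refl _
      · rw [show (Cotree.node b ts).leaves = leavesAux ts from rfl]
        exact sublist_of_mem_subtreesAux h
theorem sublist_of_mem_subtreesAux : ∀ {ts : List (Cotree V)} {s : Cotree V},
    s ∈ subtreesAux ts → s.leaves.Sublist (leavesAux ts)
  | [], s, h => by simp [subtreesAux] at h
  | t :: ts, s, h => by
      rw [subtreesAux] at h
      rcases List.mem_append.1 h with h | h
      · exact (sublist_of_mem_subtrees h).trans (by rw [leavesAux]; exact List.sublist_append_left _ _)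
      · exact (sublist_of_mem_subtreesAux h).trans (by rw [leavesAux]; exact List.sublist_append_right _ _)
end

theorem mem_subtreesAux_of_mem : ∀ {ts : List (Cotree V)} {n s : Cotree V},
    n ∈ ts → s ∈ n.subtrees → s ∈ subtreesAux ts
  | [], n, s, h, _ => by simp at h
  | t :: ts, n, s, h, hs => by
      rw [subtreesAux]
      rcases List.mem_cons.1 h with h | h
      · subst h; exact List.mem_append_left _ hs
      · exact List.mem_append_right _ (mem_subtreesAux_of_mem h hs)

theorem exists_child_of_mem_subtreesAux : ∀ {ts : List (Cotree V)} {s : Cotree V},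
    s ∈ subtreesAux ts → ∃ c ∈ ts, s ∈ c.subtrees
  | [], s, h => by simp [subtreesAux] at h
  | t :: ts, s, h => by
      rw [subtreesAux] at h
      rcases List.mem_append.1 h with h | h
      · exact ⟨t, List.mem_cons_self, h⟩
      · obtain ⟨c, hc, hsc⟩ := exists_child_of_mem_subtreesAux h
        exact ⟨c, List.mem_cons_of_mem _ hc, hsc⟩

theorem sibling_disjoint : ∀ {ts : List (Cotree V)} {t₁ t₂ : Cotree V} {x : V},
    (leavesAux ts).Nodup → t₁ ∈ ts → t₂ ∈ ts → t₁ ≠ t₂ →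
    x ∈ t₁.leaves → x ∈ t₂.leaves → False
  | [], _, _, _, _, h, _, _, _, _ => by simp at h
  | t :: ts, t₁, t₂, x, hnd, h1, h2, hne, hx1, hx2 => by
      rw [leavesAux] at hnd
      have hdisj := List.disjoint_of_nodup_append hnd
      have hsub : ∀ c ∈ ts, c.leaves.Sublist (leavesAux ts) := fun c hc =>
        sublist_of_mem_subtreesAux (mem_subtreesAux_of_mem hc (self_mem_subtrees c))
      rcases List.mem_cons.1 h1 with m1 | m1
      · rcases List.mem_cons.1 h2 with m2 | m2
        · exact hne (m1.trans m2.symm)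
        · exact hdisj (m1 ▸ hx1) ((hsub _ m2).subset hx2)
      · rcases List.mem_cons.1 h2 with m2 | m2
        · exact hdisj (m2 ▸ hx2) ((hsub _ m1).subset hx1)
        · exact sibling_disjoint ((List.nodup_append.1 hnd).2.1) m1 m2 hne hx1 hx2

theorem comparable : ∀ {t s₁ s₂ : Cotree V} {x : V}, t.leaves.Nodup →
    s₁ ∈ t.subtrees → s₂ ∈ t.subtrees → x ∈ s₁.leaves → x ∈ s₂.leaves →
    s₁ ∈ s₂.subtrees ∨ s₂ ∈ s₁.subtrees
  | .leaf v, s₁, s₂, x, _, h1, h2, _, _ => by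
      simp [subtrees] at h1 h2; subst h1; subst h2
      exact Or.inl (self_mem_subtrees _)
  | .node b ts, s₁, s₂, x, hnd, h1, h2, hx1, hx2 => by
      rw [subtrees] at h1 h2
      rcases List.mem_cons.1 h1 with h1 | h1
      · subst h1; exact Or.inr h2
      rcases List.mem_cons.1 h2 with h2 | h2
      · subst h2
        refine Or.inl ?_
        rw [subtrees]
        exact List.mem_cons_of_mem _ h1
      obtain ⟨c₁, hc₁, hs₁⟩ := exists_child_of_mem_subtreesAux h1
      obtain ⟨c₂, hc₂, hs₂⟩ := exists_child_of_mem_subtreesAux h2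
      by_cases hcc : c₁ = c₂
      · subst hcc
        have hndc : c₁.leaves.Nodup :=
          ((sublist_of_mem_subtreesAux (mem_subtreesAux_of_mem hc₁ (self_mem_subtrees c₁))).nodup hnd)
        exact comparable hndc hs₁ hs₂ hx1 hx2
      · exact (sibling_disjoint hnd hc₁ hc₂ hcc
          ((sublist_of_mem_subtrees hs₁).subset hx1) ((sublist_of_mem_subtrees hs₂).subset hx2)).elim

end Cotree

/-- Key structural fact: for a clade `s` of a cotree, adjacency to an external
vertex is uniform across the clade. -/
theorem adj_uniform {T : Cotree V} {G : SimpleGraph V} (hT : IsCotree T G)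
    {s : Cotree V} (hs : s ∈ T.subtrees) {x₁ x₂ y : V}
    (hx₁ : x₁ ∈ s.leaves) (hx₂ : x₂ ∈ s.leaves) (hy : y ∉ s.leaves)
    (h : G.Adj x₁ y) : G.Adj x₂ y := by
  rw [hT.adj] at h ⊢
  obtain ⟨ts, hn, t₁, ht₁, t₂, ht₂, hne, hxt, hyt⟩ := h
  have hx₁n : x₁ ∈ (Cotree.node true ts).leaves :=
    (Cotree.sublist_of_mem_subtreesAux
      (Cotree.mem_subtreesAux_of_mem ht₁ (Cotree.self_mem_subtrees t₁))).subset hxt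
  have hyn : y ∈ (Cotree.node true ts).leaves :=
    (Cotree.sublist_of_mem_subtreesAux
      (Cotree.mem_subtreesAux_of_mem ht₂ (Cotree.self_mem_subtrees t₂))).subset hyt
  rcases Cotree.comparable hT.nodup hs hn hx₁ hx₁n with hcomp | hcomp
  · rw [Cotree.subtrees] at hcomp
    rcases List.mem_cons.1 hcomp with heq | hcomp
    · rw [heq] at hy; exact absurd hyn hy
    · obtain ⟨c, hc, hsc⟩ := Cotree.exists_child_of_mem_subtreesAux hcomp
      have hsl : s.leaves ⊆ c.leaves := (Cotree.sublist_of_mem_subtrees hsc).subset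
      have hnd_n : (Cotree.node true ts).leaves.Nodup :=
        (Cotree.sublist_of_mem_subtrees hn).nodup hT.nodup
      have hct₂ : c ≠ t₂ := by
        rintro rfl
        exact Cotree.sibling_disjoint hnd_n ht₁ hc hne hxt (hsl hx₁)
      exact ⟨ts, hn, c, hc, t₂, ht₂, hct₂, hsl hx₂, hyt⟩
  · exact absurd ((Cotree.sublist_of_mem_subtrees hcomp).subset hyn) hy

end TreeLemmas

section CostLemmas
variable [Fintype V] [DecidableEq V]

/-- The set of "bad" pairs of a partition: cut edges within `X` plus non-edges
inside a part. -/
def badSet (G : SimpleGraph V) (X : Finset V) (parts : Finset (Finset V)) : Set (Sym2 V) :=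
  {e : Sym2 V | e ∈ G.edgeSet ∧ (∀ v ∈ e, v ∈ X) ∧ ¬ ∃ C ∈ parts, ∀ v ∈ e, v ∈ C} ∪
  {e : Sym2 V | e ∈ Gᶜ.edgeSet ∧ ∃ C ∈ parts, ∀ v ∈ e, v ∈ C}

lemma costOn_eq (G : SimpleGraph V) (X : Finset V) (P : Finpartition X) :
    costOn G X P = (badSet G X P.parts).ncard := by
  have hdisj : Disjoint
      {e : Sym2 V | e ∈ G.edgeSet ∧ (∀ v ∈ e, v ∈ X) ∧ ¬ ∃ C ∈ P.parts, ∀ v ∈ e, v ∈ C}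
      {e : Sym2 V | e ∈ Gᶜ.edgeSet ∧ ∃ C ∈ P.parts, ∀ v ∈ e, v ∈ C} := by
    rw [Set.disjoint_left]
    rintro e ⟨he, -⟩ ⟨he', -⟩
    induction e using Sym2.ind with
    | _ a b =>
      rw [SimpleGraph.mem_edgeSet] at he he'
      exact ((SimpleGraph.compl_adj _ _ _).1 he').2 he
  rw [costOn, badSet, Set.ncard_union_eq hdisj]

lemma forall_sym2 {p : V → Prop} {a b : V} : (∀ v ∈ (s(a, b) : Sym2 V), p v) ↔ p a ∧ p b := by
  constructor
  · intro h; exact ⟨h a (Sym2.mem_mk_left a b), h b (Sym2.mem_mk_right a b)⟩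
  · rintro ⟨h1, h2⟩ v hv; rcases Sym2.mem_iff.1 hv with rfl | rfl <;> assumption

lemma mem_badSet {G : SimpleGraph V} {X : Finset V} {parts : Finset (Finset V)} {a b : V} :
    s(a, b) ∈ badSet G X parts ↔
      (G.Adj a b ∧ (a ∈ X ∧ b ∈ X) ∧ ¬ ∃ C ∈ parts, a ∈ C ∧ b ∈ C) ∨
      ((a ≠ b ∧ ¬ G.Adj a b) ∧ ∃ C ∈ parts, a ∈ C ∧ b ∈ C) := by
  simp only [badSet, Set.mem_union, Set.mem_setOf_eq, SimpleGraph.mem_edgeSet,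
    SimpleGraph.compl_adj, forall_sym2]

/-- pair classification predicates -/
def pIn (X : Finset V) : Set (Sym2 V) := {e | ∀ v ∈ e, v ∈ X}
def pOut (X : Finset V) : Set (Sym2 V) := {e | ∀ v ∈ e, v ∉ X}
def pT (X O : Finset V) : Set (Sym2 V) := {e | ∃ x y, e = s(x, y) ∧ x ∈ X ∧ y ∈ O}
def pMid (X O : Finset V) : Set (Sym2 V) :=
  {e | (∃ v ∈ e, v ∈ X) ∧ (∃ v ∈ e, v ∉ X) ∧ e ∉ pT X O}

lemma cover4 (X O : Finset V) (e : Sym2 V) : e ∈ pIn X ∪ pOut X ∪ pMid X O ∪ pT X O := by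
  induction e using Sym2.ind with
  | _ a b =>
    simp only [Set.mem_union]
    by_cases hT : s(a, b) ∈ pT X O
    · exact Or.inr hT
    by_cases ha : a ∈ X <;> by_cases hb : b ∈ X
    · refine Or.inl (Or.inl (Or.inl ?_))
      intro v hv; rcases Sym2.mem_iff.1 hv with rfl | rfl <;> assumption
    · exact Or.inl (Or.inr ⟨⟨a, Sym2.mem_mk_left a b, ha⟩, ⟨b, Sym2.mem_mk_right a b, hb⟩, hT⟩)
    · exact Or.inl (Or.inr ⟨⟨b, Sym2.mem_mk_right a b, hb⟩, ⟨a, Sym2.mem_mk_left a b, ha⟩, hT⟩)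
    · refine Or.inl (Or.inl (Or.inr ?_))
      intro v hv; rcases Sym2.mem_iff.1 hv with rfl | rfl <;> assumption

lemma dInOut (X : Finset V) : Disjoint (pIn X) (pOut X) := by
  rw [Set.disjoint_left]
  intro e h1 h2
  induction e using Sym2.ind with
  | _ a b => exact h2 a (Sym2.mem_mk_left a b) (h1 a (Sym2.mem_mk_left a b))

lemma dInMid (X O : Finset V) : Disjoint (pIn X) (pMid X O) := by
  rw [Set.disjoint_left]
  rintro e h1 ⟨-, ⟨v, hv, hvX⟩, -⟩
  exact hvX (h1 v hv)

lemma dInT (X O : Finset V) (hOX : ∀ y ∈ O, y ∉ X) : Disjoint (pIn X) (pT X O) := by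
  rw [Set.disjoint_left]
  rintro e h1 ⟨x, y, rfl, hx, hy⟩
  exact hOX y hy (h1 y (Sym2.mem_mk_right x y))

lemma dOutMid (X O : Finset V) : Disjoint (pOut X) (pMid X O) := by
  rw [Set.disjoint_left]
  rintro e h1 ⟨⟨v, hv, hvX⟩, -, -⟩
  exact h1 v hv hvX

lemma dOutT (X O : Finset V) : Disjoint (pOut X) (pT X O) := by
  rw [Set.disjoint_left]
  rintro e h1 ⟨x, y, rfl, hx, hy⟩
  exact h1 x (Sym2.mem_mk_left x y) hx

lemma dMidT (X O : Finset V) : Disjoint (pMid X O) (pT X O) := by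
  rw [Set.disjoint_left]
  rintro e ⟨-, -, h⟩ h2
  exact h h2

lemma piece4 {α : Type u} [Fintype α] (s p₁ p₂ p₃ p₄ : Set α)
    (hcov : ∀ e, e ∈ p₁ ∪ p₂ ∪ p₃ ∪ p₄)
    (h12 : Disjoint p₁ p₂) (h13 : Disjoint p₁ p₃) (h14 : Disjoint p₁ p₄)
    (h23 : Disjoint p₂ p₃) (h24 : Disjoint p₂ p₄) (h34 : Disjoint p₃ p₄) :
    s.ncard = (s ∩ p₁).ncard + (s ∩ p₂).ncard + (s ∩ p₃).ncard + (s ∩ p₄).ncard := by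
  have key : s = ((s ∩ p₁) ∪ (s ∩ p₂) ∪ (s ∩ p₃)) ∪ (s ∩ p₄) := by
    rw [← Set.inter_union_distrib_left, ← Set.inter_union_distrib_left,
      ← Set.inter_union_distrib_left]
    exact (Set.inter_eq_left.2 fun e he => hcov e).symm
  have m : ∀ p q : Set α, Disjoint p q → Disjoint (s ∩ p) (s ∩ q) := fun p q h =>
    h.mono Set.inter_subset_right Set.inter_subset_right
  nth_rewrite 1 [key]
  rw [Set.ncard_union_eq (by
    refine Set.disjoint_union_left.2 ⟨Set.disjoint_union_left.2 ⟨m _ _ h14, m _ _ h24⟩, m _ _ h34⟩)]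
  rw [Set.ncard_union_eq (Set.disjoint_union_left.2 ⟨m _ _ h13, m _ _ h23⟩)]
  rw [Set.ncard_union_eq (m _ _ h12)]

def pairSet (P Q : Finset V) : Set (Sym2 V) := {e | ∃ x ∈ P, ∃ y ∈ Q, e = s(x, y)}

lemma ncard_pairSet (P Q : Finset V) (h : Disjoint P Q) :
    (pairSet P Q).ncard = P.card * Q.card := by
  have himg : pairSet P Q = (fun p : V × V => s(p.1, p.2)) '' ((P ×ˢ Q : Finset (V × V)) : Set (V × V)) := by
    ext e
    simp only [pairSet, Set.mem_image, Set.mem_setOf_eq, Finset.mem_coe, Finset.mem_product]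
    constructor
    · rintro ⟨x, hx, y, hy, rfl⟩; exact ⟨(x, y), ⟨hx, hy⟩, rfl⟩
    · rintro ⟨⟨x, y⟩, ⟨hx, hy⟩, rfl⟩; exact ⟨x, hx, y, hy, rfl⟩
  rw [himg, Set.ncard_image_of_injOn, Set.ncard_coe_finset, Finset.card_product]
  rintro ⟨x, y⟩ hxy ⟨x', y'⟩ hxy' heq
  simp only [Finset.mem_coe, Finset.mem_product] at hxy hxy'
  obtain ⟨hx, hy⟩ := hxy
  obtain ⟨hx', hy'⟩ := hxy'
  rcases Sym2.eq_iff.1 (show s(x, y) = s(x', y') from heq) with ⟨h1, h2⟩ | ⟨h1, h2⟩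
  · rw [h1, h2]
  · exact absurd (h1 ▸ hy') (Finset.disjoint_left.1 h hx)

lemma badSet_inter_pIn {G : SimpleGraph V} {Pc Q : Finset (Finset V)} {X : Finset V}
    (hiff : ∀ a b : V, a ∈ X → b ∈ X →
      ((∃ C ∈ Pc, a ∈ C ∧ b ∈ C) ↔ (∃ D ∈ Q, a ∈ D ∧ b ∈ D)))
    (hQX : ∀ D ∈ Q, D ⊆ X) :
    badSet G univ Pc ∩ pIn X = badSet G X Q := by
  ext e
  induction e using Sym2.ind with
  | _ a b =>
    have hpin : s(a, b) ∈ pIn X ↔ a ∈ X ∧ b ∈ X := by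
      simp only [pIn, Set.mem_setOf_eq, forall_sym2]
    constructor
    · rintro ⟨hbad, hin⟩
      obtain ⟨hax, hbx⟩ := hpin.1 hin
      rw [mem_badSet] at hbad ⊢
      rcases hbad with ⟨hadj, -, hnot⟩ | ⟨hne, hsm⟩
      · exact Or.inl ⟨hadj, ⟨hax, hbx⟩, fun hD => hnot ((hiff a b hax hbx).2 hD)⟩
      · exact Or.inr ⟨hne, (hiff a b hax hbx).1 hsm⟩
    · intro hbad
      rw [mem_badSet] at hbad
      rcases hbad with ⟨hadj, ⟨hax, hbx⟩, hnot⟩ | ⟨hne, ⟨D, hD, haD, hbD⟩⟩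
      · refine ⟨mem_badSet.2 (Or.inl ⟨hadj, ⟨Finset.mem_univ a, Finset.mem_univ b⟩,
          fun hC => hnot ((hiff a b hax hbx).1 hC)⟩), hpin.2 ⟨hax, hbx⟩⟩
      · have hax := hQX D hD haD
        have hbx := hQX D hD hbD
        exact ⟨mem_badSet.2 (Or.inr ⟨hne, (hiff a b hax hbx).2 ⟨D, hD, haD, hbD⟩⟩),
          hpin.2 ⟨hax, hbx⟩⟩

lemma badSet_inter_pOut {G : SimpleGraph V} {P1 P2 : Finset (Finset V)} {X : Finset V}
    (hiff : ∀ a b : V, a ∉ X → b ∉ X →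
      ((∃ C ∈ P1, a ∈ C ∧ b ∈ C) ↔ (∃ C ∈ P2, a ∈ C ∧ b ∈ C))) :
    badSet G univ P1 ∩ pOut X = badSet G univ P2 ∩ pOut X := by
  have key : ∀ Q1 Q2 : Finset (Finset V),
      (∀ a b : V, a ∉ X → b ∉ X →
        ((∃ C ∈ Q1, a ∈ C ∧ b ∈ C) ↔ (∃ C ∈ Q2, a ∈ C ∧ b ∈ C))) →
      badSet G univ Q1 ∩ pOut X ⊆ badSet G univ Q2 ∩ pOut X := by
    intro Q1 Q2 hQ e
    induction e using Sym2.ind with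
    | _ a b =>
      rintro ⟨hbad, hout⟩
      have hax : a ∉ X := hout a (Sym2.mem_mk_left a b)
      have hbx : b ∉ X := hout b (Sym2.mem_mk_right a b)
      refine ⟨?_, hout⟩
      rw [mem_badSet] at hbad ⊢
      rcases hbad with ⟨hadj, hu, hnot⟩ | ⟨hne, hsm⟩
      · exact Or.inl ⟨hadj, hu, fun hC => hnot ((hQ a b hax hbx).2 hC)⟩
      · exact Or.inr ⟨hne, (hQ a b hax hbx).1 hsm⟩
  exact Set.Subset.antisymm (key P1 P2 hiff) (key P2 P1 fun a b ha hb => (hiff a b ha hb).symm)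

lemma badSet_inter_pMid {G : SimpleGraph V} {P1 P2 : Finset (Finset V)} {X O : Finset V}
    (h1 : ∀ a b : V, a ∈ X → b ∉ X → b ∉ O → ¬ ∃ C ∈ P1, a ∈ C ∧ b ∈ C)
    (h2 : ∀ a b : V, a ∈ X → b ∉ X → b ∉ O → ¬ ∃ C ∈ P2, a ∈ C ∧ b ∈ C) :
    badSet G univ P1 ∩ pMid X O = badSet G univ P2 ∩ pMid X O := by
  suffices h : ∀ (P : Finset (Finset V)),
      (∀ a b : V, a ∈ X → b ∉ X → b ∉ O → ¬ ∃ C ∈ P, a ∈ C ∧ b ∈ C) →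
      badSet G univ P ∩ pMid X O = {e | e ∈ G.edgeSet ∧ e ∈ pMid X O} by
    rw [h P1 h1, h P2 h2]
  intro P hP
  ext e
  induction e using Sym2.ind with
  | _ a b =>
    constructor
    · rintro ⟨hbad, hmid⟩
      refine ⟨?_, hmid⟩
      obtain ⟨⟨v, hv, hvX⟩, ⟨w, hw, hwX⟩, hnT⟩ := hmid
      have hnsame : ¬ ∃ C ∈ P, a ∈ C ∧ b ∈ C := by
        rcases Sym2.mem_iff.1 hv with rfl | rfl <;> rcases Sym2.mem_iff.1 hw with rfl | rfl
        · exact absurd hvX hwX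
        · intro hsm
          exact hP v w hvX hwX (fun hwO => hnT ⟨v, w, rfl, hvX, hwO⟩) hsm
        · intro hsm
          refine hP v w hvX hwX (fun hwO => hnT ⟨v, w, Sym2.eq_swap, hvX, hwO⟩) ?_
          obtain ⟨C, hC, hC1, hC2⟩ := hsm
          exact ⟨C, hC, hC2, hC1⟩
        · exact absurd hvX hwX
      rw [mem_badSet] at hbad
      rcases hbad with ⟨hadj, -, -⟩ | ⟨-, hsm⟩
      · exact (SimpleGraph.mem_edgeSet G).2 hadj
      · exact absurd hsm hnsame
    · rintro ⟨hedge, hmid⟩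
      refine ⟨?_, hmid⟩
      obtain ⟨⟨v, hv, hvX⟩, ⟨w, hw, hwX⟩, hnT⟩ := hmid
      have hnsame : ¬ ∃ C ∈ P, a ∈ C ∧ b ∈ C := by
        rcases Sym2.mem_iff.1 hv with rfl | rfl <;> rcases Sym2.mem_iff.1 hw with rfl | rfl
        · exact absurd hvX hwX
        · intro hsm
          exact hP v w hvX hwX (fun hwO => hnT ⟨v, w, rfl, hvX, hwO⟩) hsm
        · intro hsm
          refine hP v w hvX hwX (fun hwO => hnT ⟨v, w, Sym2.eq_swap, hvX, hwO⟩) ?_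
          obtain ⟨C, hC, hC1, hC2⟩ := hsm
          exact ⟨C, hC, hC2, hC1⟩
        · exact absurd hvX hwX
      exact mem_badSet.2 (Or.inl ⟨(SimpleGraph.mem_edgeSet G).1 hedge,
        ⟨Finset.mem_univ a, Finset.mem_univ b⟩, hnsame⟩)

lemma badSet_inter_pT {G : SimpleGraph V} {P : Finset (Finset V)} {X O A Sp : Finset V}
    (hOX : ∀ y ∈ O, y ∉ X) (hAO : A ⊆ O) (hSpX : Sp ⊆ X)
    (hadj : ∀ x ∈ X, ∀ y ∈ O, (G.Adj x y ↔ y ∈ A))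
    (hsame : ∀ a ∈ X, ∀ b ∈ O, ((∃ C ∈ P, a ∈ C ∧ b ∈ C) ↔ a ∈ Sp)) :
    badSet G univ P ∩ pT X O = pairSet (X \ Sp) A ∪ pairSet Sp (O \ A) := by
  ext e
  constructor
  · rintro ⟨hbad, x, y, rfl, hx, hy⟩
    rw [mem_badSet] at hbad
    rcases hbad with ⟨hadj', -, hnot⟩ | ⟨⟨-, hnadj⟩, hsm⟩
    · exact Or.inl ⟨x, Finset.mem_sdiff.2 ⟨hx, fun hxS => hnot ((hsame x hx y hy).2 hxS)⟩,
        y, (hadj x hx y hy).1 hadj', rfl⟩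
    · exact Or.inr ⟨x, (hsame x hx y hy).1 hsm,
        y, Finset.mem_sdiff.2 ⟨hy, fun hyA => hnadj ((hadj x hx y hy).2 hyA)⟩, rfl⟩
  · rintro (⟨x, hx, y, hy, rfl⟩ | ⟨x, hx, y, hy, rfl⟩)
    · obtain ⟨hxX, hxS⟩ := Finset.mem_sdiff.1 hx
      have hyO := hAO hy
      refine ⟨mem_badSet.2 (Or.inl ⟨(hadj x hxX y hyO).2 hy,
        ⟨Finset.mem_univ _, Finset.mem_univ _⟩,
        fun hsm => hxS ((hsame x hxX y hyO).1 hsm)⟩), x, y, rfl, hxX, hyO⟩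
    · obtain ⟨hyO, hyA⟩ := Finset.mem_sdiff.1 hy
      have hxX := hSpX hx
      refine ⟨mem_badSet.2 (Or.inr ⟨⟨?_, fun had => hyA ((hadj x hxX y hyO).1 had)⟩,
        (hsame x hxX y hyO).2 hx⟩), x, y, rfl, hxX, hyO⟩
      rintro rfl
      exact hOX x hyO hxX

lemma pairSet_disj {X O A Sp : Finset V} (hOX : ∀ y ∈ O, y ∉ X) (hAO : A ⊆ O) :
    Disjoint (pairSet (X \ Sp) A) (pairSet Sp (O \ A)) := by
  rw [Set.disjoint_left]
  rintro e ⟨x, hx, y, hy, rfl⟩ ⟨x', hx', y', hy', heq⟩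
  rcases Sym2.eq_iff.1 heq with ⟨h1, h2⟩ | ⟨h1, h2⟩
  · exact (Finset.mem_sdiff.1 hx).2 (h1 ▸ hx')
  · exact hOX y' (Finset.mem_sdiff.1 hy').1 (h1 ▸ (Finset.mem_sdiff.1 hx).1)

end CostLemmas

section Core
variable [Fintype V] [DecidableEq V]

theorem core (G : SimpleGraph V) (𝒞 : Finpartition (univ : Finset V)) (hopt : IsOptimal G 𝒞)
    (X S O A S' : Finset V) (𝒟 𝒟' : Finpartition X)
    (h𝒟 : 𝒟.parts = (𝒞.parts.image (· ∩ X)).erase ∅)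
    (hS'0 : S' = ∅ ∨ S' ∈ 𝒟'.parts)
    (hOX : ∀ y ∈ O, y ∉ X) (hSX : S ⊆ X) (hS'X : S' ⊆ X) (hAO : A ⊆ O)
    (hclass : ∀ C ∈ 𝒞.parts, C ∩ X = ∅ ∨ C ⊆ X ∨ (C ∩ X = S ∧ C \ X = O))
    (hCst : O.Nonempty → (S ∪ O ∈ 𝒞.parts ∧ S.Nonempty))
    (hadj : ∀ x ∈ X, ∀ y ∈ O, (G.Adj x y ↔ y ∈ A))
    (hle : (X.card - S'.card) * A.card + S'.card * (O.card - A.card) ≤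
           (X.card - S.card) * A.card + S.card * (O.card - A.card)) :
    costOn G X 𝒟 ≤ costOn G X 𝒟' := by
  classical
  set parts' : Finset (Finset V) :=
    (𝒞.parts.filter fun C => C ∩ X = ∅) ∪ (𝒟'.parts.erase S') ∪
      (({S' ∪ O} : Finset (Finset V)).erase ∅) with hparts'
  have hmem' : ∀ P : Finset V, P ∈ parts' ↔
      (P ∈ 𝒞.parts ∧ P ∩ X = ∅) ∨ (P ∈ 𝒟'.parts ∧ P ≠ S') ∨ (P = S' ∪ O ∧ P ≠ ∅) := by
    intro P
    simp only [hparts', Finset.mem_union, Finset.mem_filter, Finset.mem_erase,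
      Finset.mem_singleton]
    tauto
  have hD'X : ∀ D ∈ 𝒟'.parts, D ⊆ X := fun D hD => 𝒟'.le hD
  have hDX : ∀ D ∈ 𝒟.parts, D ⊆ X := fun D hD => 𝒟.le hD
  -- disjointness of the new parts
  have hCout : ∀ R : Finset V, R ∈ 𝒞.parts ∧ R ∩ X = ∅ → ∀ x ∈ R, x ∉ X := by
    rintro R ⟨hR, hRX⟩ x hx hxX
    exact Finset.notMem_empty x (hRX ▸ Finset.mem_inter.2 ⟨hx, hxX⟩)
  have hPO : ∀ R : Finset V, R ∈ 𝒞.parts ∧ R ∩ X = ∅ → Disjoint R O := by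
    rintro R ⟨hR, hRX⟩
    rcases O.eq_empty_or_nonempty with rfl | hOne
    · exact Finset.disjoint_empty_right R
    · obtain ⟨hCst1, hSne⟩ := hCst hOne
      have hRne : R ≠ S ∪ O := by
        rintro rfl
        obtain ⟨s0, hs0⟩ := hSne
        exact Finset.notMem_empty s0
          (hRX ▸ Finset.mem_inter.2 ⟨Finset.mem_union_left _ hs0, hSX hs0⟩)
      exact (𝒞.disjoint hR hCst1 hRne).mono_right Finset.subset_union_right
  have hdisj' : ∀ P ∈ parts', ∀ Q ∈ parts', P ≠ Q → Disjoint P Q := by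
    intro P hP Q hQ hne
    rw [hmem'] at hP hQ
    have houtD' : ∀ R R' : Finset V, R ∈ 𝒞.parts ∧ R ∩ X = ∅ → R' ⊆ X → Disjoint R R' :=
      fun R R' hR hR' => Finset.disjoint_left.2 fun x hx hx' => hCout R hR x hx (hR' hx')
    have houtSO : ∀ R : Finset V, R ∈ 𝒞.parts ∧ R ∩ X = ∅ → Disjoint R (S' ∪ O) :=
      fun R hR => Finset.disjoint_union_right.2 ⟨houtD' R S' hR hS'X, hPO R hR⟩
    have hD'SO : ∀ R : Finset V, R ∈ 𝒟'.parts ∧ R ≠ S' → Disjoint R (S' ∪ O) := by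
      rintro R ⟨hR, hRS⟩
      refine Finset.disjoint_union_right.2 ⟨?_, ?_⟩
      · rcases hS'0 with rfl | hS'
        · exact Finset.disjoint_empty_right R
        · exact 𝒟'.disjoint hR hS' hRS
      · exact Finset.disjoint_left.2 fun x hx hxO => hOX x hxO (hD'X R hR hx)
    rcases hP with hP | hP | hP <;> rcases hQ with hQ | hQ | hQ
    · exact 𝒞.disjoint hP.1 hQ.1 hne
    · exact houtD' P Q hP (hD'X Q hQ.1)
    · exact hQ.1 ▸ houtSO P hP
    · exact (houtD' Q P hQ (hD'X P hP.1)).symm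
    · exact 𝒟'.disjoint hP.1 hQ.1 hne
    · exact hQ.1 ▸ hD'SO P hP
    · exact (hP.1 ▸ houtSO Q hQ).symm
    · exact (hP.1 ▸ hD'SO Q hQ).symm
    · exact absurd (hP.1.trans hQ.1.symm) hne
  have hsup' : parts'.sup id = univ := by
    apply Finset.Subset.antisymm (Finset.subset_univ _)
    intro v _
    rw [Finset.mem_sup]
    by_cases hvX : v ∈ X
    · obtain ⟨D, hD, hvD⟩ := 𝒟'.exists_mem hvX
      by_cases hDS : D = S'
      · refine ⟨S' ∪ O, (hmem' _).2 (Or.inr (Or.inr ⟨rfl, ?_⟩)),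
          Finset.mem_union_left _ (hDS ▸ hvD)⟩
        intro h0
        exact Finset.notMem_empty v (h0 ▸ Finset.mem_union_left _ (hDS ▸ hvD))
      · exact ⟨D, (hmem' D).2 (Or.inr (Or.inl ⟨hD, hDS⟩)), hvD⟩
    · obtain ⟨C, hC, hvC⟩ := 𝒞.exists_mem (Finset.mem_univ v)
      rcases hclass C hC with h | h | h
      · exact ⟨C, (hmem' C).2 (Or.inl ⟨hC, h⟩), hvC⟩
      · exact absurd (h hvC) hvX
      · have hvO : v ∈ O := h.2 ▸ Finset.mem_sdiff.2 ⟨hvC, hvX⟩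
        refine ⟨S' ∪ O, (hmem' _).2 (Or.inr (Or.inr ⟨rfl, ?_⟩)), Finset.mem_union_right _ hvO⟩
        intro h0
        exact Finset.notMem_empty v (h0 ▸ Finset.mem_union_right _ hvO)
  have hnb : (⊥ : Finset V) ∉ parts' := by
    rw [hmem']
    rintro (h | h | h)
    · exact 𝒞.bot_notMem h.1
    · exact 𝒟'.bot_notMem h.1
    · exact h.2 Finset.bot_eq_empty
  let 𝒞' : Finpartition (univ : Finset V) :=
    ⟨parts', Finset.supIndep_iff_pairwiseDisjoint.2
      (fun P hP Q hQ hne => hdisj' P (Finset.mem_coe.1 hP) Q (Finset.mem_coe.1 hQ) hne),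
      hsup', hnb⟩
  -- same-part characterisations
  have same𝒞 : ∀ a ∈ X, ∀ b ∈ O, ((∃ C ∈ 𝒞.parts, a ∈ C ∧ b ∈ C) ↔ a ∈ S) := by
    intro a ha b hb
    constructor
    · rintro ⟨C, hC, haC, hbC⟩
      rcases hclass C hC with h | h | h
      · exact absurd (h ▸ Finset.mem_inter.2 ⟨haC, ha⟩) (Finset.notMem_empty a)
      · exact absurd (h hbC) (hOX b hb)
      · exact h.1 ▸ Finset.mem_inter.2 ⟨haC, ha⟩
    · intro haS
      obtain ⟨hCst1, -⟩ := hCst ⟨b, hb⟩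
      exact ⟨S ∪ O, hCst1, Finset.mem_union_left _ haS, Finset.mem_union_right _ hb⟩
  have same𝒞' : ∀ a ∈ X, ∀ b ∈ O, ((∃ C ∈ parts', a ∈ C ∧ b ∈ C) ↔ a ∈ S') := by
    intro a ha b hb
    constructor
    · rintro ⟨C, hC, haC, hbC⟩
      rcases (hmem' C).1 hC with h | h | h
      · exact absurd ha (hCout C h a haC)
      · exact ((hOX b hb) (hD'X C h.1 hbC)).elim
      · rcases Finset.mem_union.1 (h.1 ▸ haC) with h' | h'
        · exact h'
        · exact absurd ha (hOX a h')
    · intro haS'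
      have hso : S' ∪ O ∈ parts' := (hmem' _).2 (Or.inr (Or.inr ⟨rfl, fun h0 =>
        Finset.notMem_empty a (h0 ▸ Finset.mem_union_left _ haS')⟩))
      exact ⟨S' ∪ O, hso, Finset.mem_union_left _ haS', Finset.mem_union_right _ hb⟩
  have out_iff : ∀ a b : V, a ∉ X → b ∉ X →
      ((∃ C ∈ parts', a ∈ C ∧ b ∈ C) ↔ (∃ C ∈ 𝒞.parts, a ∈ C ∧ b ∈ C)) := by
    intro a b ha hb
    constructor
    · rintro ⟨C, hC, haC, hbC⟩
      rcases (hmem' C).1 hC with h | h | h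
      · exact ⟨C, h.1, haC, hbC⟩
      · exact absurd (hD'X C h.1 haC) ha
      · have haO : a ∈ O := by
          rcases Finset.mem_union.1 (h.1 ▸ haC) with h' | h'
          · exact absurd (hS'X h') ha
          · exact h'
        have hbO : b ∈ O := by
          rcases Finset.mem_union.1 (h.1 ▸ hbC) with h' | h'
          · exact absurd (hS'X h') hb
          · exact h'
        obtain ⟨hCst1, -⟩ := hCst ⟨a, haO⟩
        exact ⟨S ∪ O, hCst1, Finset.mem_union_right _ haO, Finset.mem_union_right _ hbO⟩
    · rintro ⟨C, hC, haC, hbC⟩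
      rcases hclass C hC with h | h | h
      · exact ⟨C, (hmem' C).2 (Or.inl ⟨hC, h⟩), haC, hbC⟩
      · exact absurd (h haC) ha
      · have haO : a ∈ O := h.2 ▸ Finset.mem_sdiff.2 ⟨haC, ha⟩
        have hbO : b ∈ O := h.2 ▸ Finset.mem_sdiff.2 ⟨hbC, hb⟩
        refine ⟨S' ∪ O, (hmem' _).2 (Or.inr (Or.inr ⟨rfl, fun h0 =>
          Finset.notMem_empty a (h0 ▸ Finset.mem_union_right _ haO)⟩)),
          Finset.mem_union_right _ haO, Finset.mem_union_right _ hbO⟩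
  have mid𝒞 : ∀ a b : V, a ∈ X → b ∉ X → b ∉ O → ¬ ∃ C ∈ 𝒞.parts, a ∈ C ∧ b ∈ C := by
    rintro a b ha hb hbO ⟨C, hC, haC, hbC⟩
    rcases hclass C hC with h | h | h
    · exact Finset.notMem_empty a (h ▸ Finset.mem_inter.2 ⟨haC, ha⟩)
    · exact hb (h hbC)
    · exact hbO (h.2 ▸ Finset.mem_sdiff.2 ⟨hbC, hb⟩)
  have mid𝒞' : ∀ a b : V, a ∈ X → b ∉ X → b ∉ O → ¬ ∃ C ∈ parts', a ∈ C ∧ b ∈ C := by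
    rintro a b ha hb hbO ⟨C, hC, haC, hbC⟩
    rcases (hmem' C).1 hC with h | h | h
    · exact hCout C h a haC ha
    · exact hb (hD'X C h.1 hbC)
    · rcases Finset.mem_union.1 (h.1 ▸ hbC) with h' | h'
      · exact hb (hS'X h')
      · exact hbO h'
  have in𝒞 : ∀ a b : V, a ∈ X → b ∈ X →
      ((∃ C ∈ 𝒞.parts, a ∈ C ∧ b ∈ C) ↔ (∃ D ∈ 𝒟.parts, a ∈ D ∧ b ∈ D)) := by
    intro a b ha hb
    constructor
    · rintro ⟨C, hC, haC, hbC⟩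
      refine ⟨C ∩ X, ?_, Finset.mem_inter.2 ⟨haC, ha⟩, Finset.mem_inter.2 ⟨hbC, hb⟩⟩
      rw [h𝒟, Finset.mem_erase]
      exact ⟨fun h0 => Finset.notMem_empty a (h0 ▸ Finset.mem_inter.2 ⟨haC, ha⟩),
        Finset.mem_image.2 ⟨C, hC, rfl⟩⟩
    · rintro ⟨D, hD, haD, hbD⟩
      rw [h𝒟, Finset.mem_erase] at hD
      obtain ⟨-, hD⟩ := hD
      obtain ⟨C, hC, rfl⟩ := Finset.mem_image.1 hD
      exact ⟨C, hC, (Finset.mem_inter.1 haD).1, (Finset.mem_inter.1 hbD).1⟩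
  have in𝒞' : ∀ a b : V, a ∈ X → b ∈ X →
      ((∃ C ∈ parts', a ∈ C ∧ b ∈ C) ↔ (∃ D ∈ 𝒟'.parts, a ∈ D ∧ b ∈ D)) := by
    intro a b ha hb
    constructor
    · rintro ⟨C, hC, haC, hbC⟩
      rcases (hmem' C).1 hC with h | h | h
      · exact absurd ha (hCout C h a haC)
      · exact ⟨C, h.1, haC, hbC⟩
      · have haS' : a ∈ S' := by
          rcases Finset.mem_union.1 (h.1 ▸ haC) with h' | h'
          · exact h'
          · exact absurd ha (hOX a h')
        have hbS' : b ∈ S' := by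
          rcases Finset.mem_union.1 (h.1 ▸ hbC) with h' | h'
          · exact h'
          · exact absurd hb (hOX b h')
        rcases hS'0 with rfl | hS'
        · exact absurd haS' (Finset.notMem_empty a)
        · exact ⟨S', hS', haS', hbS'⟩
    · rintro ⟨D, hD, haD, hbD⟩
      by_cases hDS : D = S'
      · refine ⟨S' ∪ O, (hmem' _).2 (Or.inr (Or.inr ⟨rfl, fun h0 =>
          Finset.notMem_empty a (h0 ▸ Finset.mem_union_left _ (hDS ▸ haD))⟩)),
          Finset.mem_union_left _ (hDS ▸ haD), Finset.mem_union_left _ (hDS ▸ hbD)⟩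
      · exact ⟨D, (hmem' D).2 (Or.inr (Or.inl ⟨hD, hDS⟩)), haD, hbD⟩
  -- decomposition of the costs
  have decomp : ∀ Pc : Finset (Finset V),
      (badSet G univ Pc).ncard =
        (badSet G univ Pc ∩ pIn X).ncard + (badSet G univ Pc ∩ pOut X).ncard +
        (badSet G univ Pc ∩ pMid X O).ncard + (badSet G univ Pc ∩ pT X O).ncard :=
    fun Pc => piece4 _ _ _ _ _ (fun e => cover4 X O e)
      (dInOut X) (dInMid X O) (dInT X O hOX) (dOutMid X O) (dOutT X O) (dMidT X O)
  have e1 : badSet G univ 𝒞.parts ∩ pIn X = badSet G X 𝒟.parts :=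
    badSet_inter_pIn in𝒞 hDX
  have e1' : badSet G univ parts' ∩ pIn X = badSet G X 𝒟'.parts :=
    badSet_inter_pIn in𝒞' hD'X
  have e2 : badSet G univ parts' ∩ pOut X = badSet G univ 𝒞.parts ∩ pOut X :=
    badSet_inter_pOut out_iff
  have e3 : badSet G univ parts' ∩ pMid X O = badSet G univ 𝒞.parts ∩ pMid X O :=
    badSet_inter_pMid mid𝒞' mid𝒞
  have e4 : (badSet G univ 𝒞.parts ∩ pT X O).ncard =
      (X.card - S.card) * A.card + S.card * (O.card - A.card) := by
    rw [badSet_inter_pT hOX hAO hSX hadj same𝒞,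
      Set.ncard_union_eq (pairSet_disj hOX hAO),
      ncard_pairSet _ _ (Finset.disjoint_left.2 fun x hx hxA =>
        hOX x (hAO hxA) (Finset.mem_sdiff.1 hx).1),
      ncard_pairSet _ _ (Finset.disjoint_left.2 fun x hx hxO =>
        hOX x (Finset.mem_sdiff.1 hxO).1 (hSX hx)),
      Finset.card_sdiff_of_subset hSX, Finset.card_sdiff_of_subset hAO]
  have e4' : (badSet G univ parts' ∩ pT X O).ncard =
      (X.card - S'.card) * A.card + S'.card * (O.card - A.card) := by
    rw [badSet_inter_pT hOX hAO hS'X hadj same𝒞',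
      Set.ncard_union_eq (pairSet_disj hOX hAO),
      ncard_pairSet _ _ (Finset.disjoint_left.2 fun x hx hxA =>
        hOX x (hAO hxA) (Finset.mem_sdiff.1 hx).1),
      ncard_pairSet _ _ (Finset.disjoint_left.2 fun x hx hxO =>
        hOX x (Finset.mem_sdiff.1 hxO).1 (hS'X hx)),
      Finset.card_sdiff_of_subset hS'X, Finset.card_sdiff_of_subset hAO]
  have A1 : cost G 𝒞 = (badSet G X 𝒟.parts).ncard +
      (badSet G univ 𝒞.parts ∩ pOut X).ncard + (badSet G univ 𝒞.parts ∩ pMid X O).ncard +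
      ((X.card - S.card) * A.card + S.card * (O.card - A.card)) := by
    rw [cost, costOn_eq, decomp 𝒞.parts, e1, e4]
  have A2 : cost G 𝒞' = (badSet G X 𝒟'.parts).ncard +
      (badSet G univ 𝒞.parts ∩ pOut X).ncard + (badSet G univ 𝒞.parts ∩ pMid X O).ncard +
      ((X.card - S'.card) * A.card + S'.card * (O.card - A.card)) := by
    rw [cost, costOn_eq]
    show (badSet G univ parts').ncard = _
    rw [decomp parts', e1', e2, e3, e4']
  have hcc := hopt 𝒞'
  rw [A1, A2] at hcc
  rw [costOn_eq G X 𝒟, costOn_eq G X 𝒟']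
  omega

end Core

section MainAux
variable [Fintype V] [DecidableEq V]

theorem main_aux (G : SimpleGraph V) (𝒞 : Finpartition (univ : Finset V))
    (hopt : IsOptimal G 𝒞) (X : Finset V) (𝒟 𝒟' : Finpartition X)
    (h𝒟 : 𝒟.parts = (𝒞.parts.image (· ∩ X)).erase ∅)
    (hsup : 𝒟'.parts.sup Finset.card = 𝒞.parts.sup fun C => (X ∩ C).card)
    (hSG : SingleGrowth 𝒞 X)
    (huni : ∀ x₁ x₂ y : V, x₁ ∈ X → x₂ ∈ X → y ∉ X → G.Adj x₁ y → G.Adj x₂ y) :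
    costOn G X 𝒟 ≤ costOn G X 𝒟' := by
  classical
  by_cases hgrow : ∃ C ∈ 𝒞.parts, grows X C
  · obtain ⟨Cs, hCs, hg⟩ := hgrow
    set S := Cs ∩ X with hS
    set O := Cs \ X with hO
    set A := O.filter (fun y => ∃ x ∈ X, G.Adj x y) with hA
    have hOX : ∀ y ∈ O, y ∉ X := fun y hy => (Finset.mem_sdiff.1 hy).2
    have hSX : S ⊆ X := Finset.inter_subset_right
    have hAO : A ⊆ O := Finset.filter_subset _ _
    have hclass : ∀ C ∈ 𝒞.parts, C ∩ X = ∅ ∨ C ⊆ X ∨ (C ∩ X = S ∧ C \ X = O) := by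
      intro C hC
      rcases (C ∩ X).eq_empty_or_nonempty with h1 | h1
      · exact Or.inl h1
      rcases (C \ X).eq_empty_or_nonempty with h2 | h2
      · exact Or.inr (Or.inl (Finset.sdiff_eq_empty_iff_subset.1 h2))
      · have hCeq : C = Cs := hSG C hC Cs hCs ⟨h1, h2⟩ hg
        exact Or.inr (Or.inr (by rw [hCeq]; exact ⟨hS.symm, hO.symm⟩))
    have hCst : O.Nonempty → (S ∪ O ∈ 𝒞.parts ∧ S.Nonempty) := by
      intro _
      refine ⟨?_, hg.1⟩
      have hSO : S ∪ O = Cs := by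
        ext a
        simp only [hS, hO, Finset.mem_union, Finset.mem_inter, Finset.mem_sdiff]
        tauto
      rw [hSO]; exact hCs
    have hadj : ∀ x ∈ X, ∀ y ∈ O, (G.Adj x y ↔ y ∈ A) := by
      intro x hx y hy
      constructor
      · intro h; exact Finset.mem_filter.2 ⟨hy, x, hx, h⟩
      · intro h
        obtain ⟨-, x', hx', h'⟩ := Finset.mem_filter.1 h
        exact huni x' x y hx' hx (hOX y hy) h'
    by_cases hB : 2 * A.card ≤ O.card
    · refine core G 𝒞 hopt X S O A ∅ 𝒟 𝒟' h𝒟 (Or.inl rfl) hOX hSX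
        (Finset.empty_subset X) hAO hclass hCst hadj ?_
      simp only [Finset.card_empty, Nat.sub_zero, zero_mul, add_zero]
      have hAOc : A.card ≤ O.card := Finset.card_le_card hAO
      have h2 : S.card * A.card ≤ S.card * (O.card - A.card) :=
        Nat.mul_le_mul_left _ (by omega)
      have e1 : (X.card - S.card) * A.card + S.card * A.card = X.card * A.card := by
        rw [← Nat.add_mul, Nat.sub_add_cancel (Finset.card_le_card hSX)]
      linarith
    · have hne : 𝒟'.parts.Nonempty := by
        by_contra h
        obtain ⟨x0, hx0⟩ := hg.1
        have hx0X : x0 ∈ X := (Finset.mem_inter.1 hx0).2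
        obtain ⟨D, hD, -⟩ := 𝒟'.exists_mem hx0X
        exact h ⟨D, hD⟩
      obtain ⟨S', hS', hSsup⟩ := Finset.exists_mem_eq_sup 𝒟'.parts hne Finset.card
      refine core G 𝒞 hopt X S O A S' 𝒟 𝒟' h𝒟 (Or.inr hS') hOX hSX (𝒟'.le hS')
        hAO hclass hCst hadj ?_
      have hSle : S.card ≤ S'.card := by
        have hsup' : S'.card = 𝒞.parts.sup fun C => (X ∩ C).card := hSsup.symm.trans hsup
        calc S.card = (X ∩ Cs).card := by rw [hS, Finset.inter_comm]
          _ ≤ 𝒞.parts.sup (fun C => (X ∩ C).card) :=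
              Finset.le_sup (f := fun C => (X ∩ C).card) hCs
          _ = S'.card := hsup'.symm
      have c1 : S.card ≤ X.card := Finset.card_le_card hSX
      have c2 : S'.card ≤ X.card := Finset.card_le_card (𝒟'.le hS')
      have c3 : A.card ≤ O.card := Finset.card_le_card hAO
      have hB' : O.card < 2 * A.card := by omega
      zify [c1, c2, c3]
      nlinarith [mul_nonneg
        (sub_nonneg.2 (show (S.card : ℤ) ≤ S'.card from by exact_mod_cast hSle))
        (show (0 : ℤ) ≤ 2 * (A.card : ℤ) - O.card from by
          have h3 : (O.card : ℤ) < 2 * A.card := by exact_mod_cast hB'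
          linarith)]
  · refine core G 𝒞 hopt X ∅ ∅ ∅ ∅ 𝒟 𝒟' h𝒟 (Or.inl rfl)
      (fun y hy => absurd hy (Finset.notMem_empty y)) (Finset.empty_subset X)
      (Finset.empty_subset X) (Finset.empty_subset ∅) ?_ ?_ ?_ le_rfl
    · intro C hC
      rcases (C ∩ X).eq_empty_or_nonempty with h1 | h1
      · exact Or.inl h1
      rcases (C \ X).eq_empty_or_nonempty with h2 | h2
      · exact Or.inr (Or.inl (Finset.sdiff_eq_empty_iff_subset.1 h2))
      · exact absurd ⟨C, hC, h1, h2⟩ hgrow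
    · rintro ⟨y, hy⟩
      exact absurd hy (Finset.notMem_empty y)
    · intro x hx y hy
      exact absurd hy (Finset.notMem_empty y)

end MainAux

/-- A well-behaved clustering: optimal, every clade has single-growth, and of
maximum number of parts among such clusterings. -/
def WellBehaved {V : Type u} [Fintype V] [DecidableEq V] (G : SimpleGraph V)
    (T : Cotree V) (𝒞 : Finpartition (univ : Finset V)) : Prop :=
  IsOptimal G 𝒞 ∧ AllSG T 𝒞 ∧
    ∀ 𝒟 : Finpartition (univ : Finset V), IsOptimal G 𝒟 → AllSG T 𝒟 →
      𝒟.parts.card ≤ 𝒞.parts.card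

theorem statement13 {V : Type u} [Fintype V] [DecidableEq V] (G : SimpleGraph V)
    (T : Cotree V) (hT : IsCotree T G) (hTPG : TPGCotree T)
    (𝒞 : Finpartition (univ : Finset V)) (hwb : WellBehaved G T 𝒞)
    (s : Cotree V) (hs : s ∈ T.subtrees)
    (𝒟 : Finpartition s.leafSet)
    (h𝒟 : 𝒟.parts = (𝒞.parts.image (· ∩ s.leafSet)).erase ∅) :
    ∀ 𝒟' : Finpartition s.leafSet,
      𝒟'.parts.sup Finset.card = (𝒞.parts.sup fun C => (s.leafSet ∩ C).card) →
      costOn G s.leafSet 𝒟 ≤ costOn G s.leafSet 𝒟' := by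
  intro 𝒟' hsup
  exact main_aux G 𝒞 hwb.1 s.leafSet 𝒟 𝒟' h𝒟 hsup (hwb.2.1 s hs)
    (fun x₁ x₂ y hx1 hx2 hy h => adj_uniform hT hs (List.mem_toFinset.1 hx1)
      (List.mem_toFinset.1 hx2) (fun hyl => hy (List.mem_toFinset.2 hyl)) h)
end ClusterEditing
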